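/- arXiv:2404.17577 — 3 statements merged into one kernel-verified Lean document; each statement's English description precedes it below -/
import Mathlib

section
/- Let (Γ, d) be ν-regular with constant κ and F(r) = (1+r)^{-α} with α > ν+1. For any ε ∈ (0, α−ν−1), any disjoint finite sets X, Y ⊂ Γ, one has Σ_{x∈X} Σ_{y∈Y} F(d(x,y)) ≤ κ C_ε |X| (1 + d(X,Y))^{−α_ε}, where α_ε = α − ν − 1 − ε and C_ε = Σ_{n≥0}(1+n)^{−(1+ε)}. -/
/-- Let `(Γ, d)` be `ν`-regular with constant `κ` and `F r = (1+r)^{-α}` with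
`α > ν + 1`. For any `ε ∈ (0, α - ν - 1)` and any disjoint finite sets `X, Y ⊆ Γ`,
`∑_{x∈X} ∑_{y∈Y} F(d(x,y)) ≤ κ C_ε |X| (1 + d(X,Y))^{-α_ε}`,
where `α_ε = α - ν - 1 - ε`, `C_ε = ∑_{n≥0} (1+n)^{-(1+ε)}`, and `d(X,Y)` is the minimum
distance between `X` and `Y` (here `D`, characterized as a lower bound which is attained). -/
theorem double_sum_F_bound {Γ : Type*} [MetricSpace Γ] [Countable Γ] [DecidableEq Γ]
    (κ ν α ε : ℝ) (hκ : 0 < κ) (hν : 0 < ν) (hα : ν + 1 < α)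
    (hε : 0 < ε) (hεα : ε < α - ν - 1)
    (hfin : ∀ (x : Γ) (r : ℝ), (Metric.closedBall x r).Finite)
    (hreg : ∀ (x : Γ) (n : ℕ), ((Metric.closedBall x (n + 1)).ncard : ℝ) ≤ κ * (1 + n) ^ ν)
    (X Y : Finset Γ) (hXY : Disjoint X Y) (hX : X.Nonempty) (hY : Y.Nonempty)
    (D : ℝ) (hD : ∀ x ∈ X, ∀ y ∈ Y, D ≤ dist x y)
    (hDmin : ∃ x ∈ X, ∃ y ∈ Y, dist x y = D) :
    (∑ x ∈ X, ∑ y ∈ Y, (1 + dist x y) ^ (-α)) ≤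
      κ * (∑' n : ℕ, (1 + (n : ℝ)) ^ (-(1 + ε))) * (X.card : ℝ) *
        (1 + D) ^ (-(α - ν - 1 - ε)) := by
  set β : ℝ := ν + 1 + ε with hβ
  set αε : ℝ := α - ν - 1 - ε with hαε
  set C : ℝ := ∑' n : ℕ, (1 + (n : ℝ)) ^ (-(1 + ε)) with hC
  have hD0 : 0 ≤ D := by
    obtain ⟨x, -, y, -, h⟩ := hDmin
    rw [← h]; exact dist_nonneg
  have hsum : Summable (fun n : ℕ => (1 + (n : ℝ)) ^ (-(1 + ε))) := by
    have h1 : Summable (fun n : ℕ => ((n : ℝ)) ^ (-(1 + ε))) :=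
      Real.summable_nat_rpow.mpr (by linarith)
    have h2 := (summable_nat_add_iff 1).mpr h1
    apply h2.congr
    intro n
    push_cast
    ring_nf
  have hC0 : 0 ≤ C := tsum_nonneg fun n => by positivity
  -- key inner bound
  have key : ∀ x : Γ, ∑ y ∈ Y, (1 + dist x y) ^ (-β) ≤ κ * C := by
    intro x
    classical
    set g : Γ → ℕ := fun y => ⌊dist x y⌋₊ with hg
    set N := (Y.sup g) + 1 with hN
    have hmaps : ∀ y ∈ Y, g y ∈ Finset.range N := fun y hy =>
      Finset.mem_range.mpr (Nat.lt_succ_of_le (Finset.le_sup hy))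
    rw [← Finset.sum_fiberwise_of_maps_to hmaps]
    have step : ∀ n ∈ Finset.range N,
        (∑ y ∈ Y.filter (fun y => g y = n), (1 + dist x y) ^ (-β)) ≤
          κ * (1 + (n : ℝ)) ^ (-(1 + ε)) := by
      intro n _
      have hterm : ∀ y ∈ Y.filter (fun y => g y = n),
          (1 + dist x y) ^ (-β) ≤ (1 + (n : ℝ)) ^ (-β) := by
        intro y hy
        obtain ⟨-, hgy⟩ := Finset.mem_filter.mp hy
        have hn : (n : ℝ) ≤ dist x y := by
          rw [← hgy]; exact Nat.floor_le dist_nonneg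
        exact Real.rpow_le_rpow_of_nonpos (by positivity) (by linarith)
          (by simp [hβ]; linarith)
      have hcard : (((Y.filter (fun y => g y = n)).card : ℝ)) ≤ κ * (1 + (n : ℝ)) ^ ν := by
        have hsub : (↑(Y.filter (fun y => g y = n)) : Set Γ) ⊆
            Metric.closedBall x ((n : ℝ) + 1) := by
          intro y hy
          simp only [Finset.coe_filter, Set.mem_setOf_eq] at hy
          obtain ⟨-, hgy⟩ := hy
          have : dist x y < (n : ℝ) + 1 := by
            rw [← hgy]; exact Nat.lt_floor_add_one _
          simp only [Metric.mem_closedBall]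
          rw [dist_comm]; linarith
        calc (((Y.filter (fun y => g y = n)).card : ℝ))
            = ((↑(Y.filter (fun y => g y = n)) : Set Γ).ncard : ℝ) := by
              rw [Set.ncard_coe_finset]
          _ ≤ ((Metric.closedBall x ((n : ℝ) + 1)).ncard : ℝ) := by
              exact_mod_cast Set.ncard_le_ncard hsub (hfin x _)
          _ ≤ κ * (1 + (n : ℝ)) ^ ν := hreg x n
      calc (∑ y ∈ Y.filter (fun y => g y = n), (1 + dist x y) ^ (-β))
          ≤ (Y.filter (fun y => g y = n)).card • (1 + (n : ℝ)) ^ (-β) :=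
            Finset.sum_le_card_nsmul _ _ _ hterm
        _ = ((Y.filter (fun y => g y = n)).card : ℝ) * (1 + (n : ℝ)) ^ (-β) := by
            rw [nsmul_eq_mul]
        _ ≤ κ * (1 + (n : ℝ)) ^ ν * (1 + (n : ℝ)) ^ (-β) := by
            apply mul_le_mul_of_nonneg_right hcard (by positivity)
        _ = κ * (1 + (n : ℝ)) ^ (-(1 + ε)) := by
            rw [mul_assoc, ← Real.rpow_add (by positivity)]
            congr 2
            simp [hβ]; ring
    calc (∑ n ∈ Finset.range N, ∑ y ∈ Y.filter (fun y => g y = n), (1 + dist x y) ^ (-β))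
        ≤ ∑ n ∈ Finset.range N, κ * (1 + (n : ℝ)) ^ (-(1 + ε)) := Finset.sum_le_sum step
      _ = κ * ∑ n ∈ Finset.range N, (1 + (n : ℝ)) ^ (-(1 + ε)) := by rw [Finset.mul_sum]
      _ ≤ κ * C :=
          mul_le_mul_of_nonneg_left
            (Summable.sum_le_tsum (Finset.range N) (fun n _ => by positivity) hsum) hκ.le
  calc (∑ x ∈ X, ∑ y ∈ Y, (1 + dist x y) ^ (-α))
      ≤ ∑ x ∈ X, (1 + D) ^ (-αε) * (κ * C) := by
        apply Finset.sum_le_sum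
        intro x hx
        calc (∑ y ∈ Y, (1 + dist x y) ^ (-α))
            ≤ ∑ y ∈ Y, (1 + D) ^ (-αε) * (1 + dist x y) ^ (-β) := by
              apply Finset.sum_le_sum
              intro y hy
              have hd : D ≤ dist x y := hD x hx y hy
              have heq : (1 + dist x y) ^ (-α) =
                  (1 + dist x y) ^ (-αε) * (1 + dist x y) ^ (-β) := by
                rw [← Real.rpow_add (by positivity)]
                congr 1
                simp [hαε, hβ]; ring
              rw [heq]
              apply mul_le_mul_of_nonneg_right
                (Real.rpow_le_rpow_of_nonpos (by positivity) (by linarith)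
                  (by simp [hαε]; linarith)) (by positivity)
          _ = (1 + D) ^ (-αε) * ∑ y ∈ Y, (1 + dist x y) ^ (-β) := by
              rw [← Finset.mul_sum]
          _ ≤ (1 + D) ^ (-αε) * (κ * C) :=
              mul_le_mul_of_nonneg_left (key x) (by positivity)
    _ = κ * C * (X.card : ℝ) * (1 + D) ^ (-αε) := by
        rw [Finset.sum_const, nsmul_eq_mul]; ring
end

section
/- Let X ⊂ Λ be finite subsets of a countable metric space (Γ, d) equipped with an F-function F, and let 𝓛 be a dissipative interaction with ‖𝓛‖_F < ∞. Then for any x ∈ X and any r ≥ 0, Σ_{Z ∈ S_{X(r)}^Λ, Z∩X = ∅} ‖L_Z‖_cb Σ_{z∈Z} F(d(x,z)) ≤ ‖𝓛‖_F (C_F + ‖F‖) Σ_{y ∈ Λ∖X(r)} F(d(x,y)). -/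
open scoped Classical

/-- Let `X ⊆ Λ` be finite subsets of a countable metric space `(Γ, d)` with
an F-function `F` (norm `‖F‖ = normF`, convolution constant `C_F = CF`), and `𝓛` a
dissipative interaction (abstracted by its cb-norms `L Z ≥ 0`) with F-norm `‖𝓛‖_F ≤ MF`.
Then for any `x ∈ X` and any `r ≥ 0`, with `X(r)` the `r`-inflation of `X`,
`∑_{Z ∈ S_{X(r)}^Λ, Z ∩ X = ∅} L Z ∑_{z∈Z} F(d(x,z)) ≤ MF (CF + ‖F‖) ∑_{y ∈ Λ∖X(r)} F(d(x,y))`. -/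
theorem surface_set_sum_bound {Γ : Type*} [MetricSpace Γ] [Countable Γ] [DecidableEq Γ]
    (F : ℝ → ℝ) (hmono : AntitoneOn F (Set.Ici 0)) (hpos : ∀ s : ℝ, 0 ≤ s → 0 < F s)
    (normF CF MF : ℝ)
    (hnorm : ∀ x : Γ, Summable (fun y : Γ => F (dist x y)) ∧
      (∑' y : Γ, F (dist x y)) ≤ normF)
    (hconv : ∀ x y : Γ, Summable (fun z : Γ => F (dist x z) * F (dist z y)) ∧
      (∑' z : Γ, F (dist x z) * F (dist z y)) ≤ CF * F (dist x y))
    (L : Finset Γ → ℝ) (hL0 : ∀ Z, 0 ≤ L Z)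
    (hLF : ∀ x y : Γ, Summable (fun Z : {Z : Finset Γ // x ∈ Z ∧ y ∈ Z} => L Z.1) ∧
      (∑' Z : {Z : Finset Γ // x ∈ Z ∧ y ∈ Z}, L Z.1) ≤ MF * F (dist x y))
    (Λ X : Finset Γ) (hXΛ : X ⊆ Λ) (x : Γ) (hx : x ∈ X) (r : ℝ) (hr : 0 ≤ r)
    (Xr : Finset Γ) (hXr : Xr = Λ.filter (fun y => ∃ x' ∈ X, dist y x' ≤ r)) :
    (∑ Z ∈ Λ.powerset.filter
        (fun Z => (Z ∩ Xr).Nonempty ∧ (Z ∩ (Λ \ Xr)).Nonempty ∧ Z ∩ X = ∅),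
      L Z * ∑ z ∈ Z, F (dist x z)) ≤
      MF * (CF + normF) * ∑ y ∈ Λ \ Xr, F (dist x y) := by

  have hF0 : ∀ a b : Γ, 0 ≤ F (dist a b) := fun a b => (hpos _ dist_nonneg).le
  have hMF : 0 ≤ MF := by
    have h := (hLF x x).2
    have h0 : (0:ℝ) ≤ ∑' Z : {Z : Finset Γ // x ∈ Z ∧ x ∈ Z}, L Z.1 :=
      tsum_nonneg fun Z => hL0 _
    have hFp : 0 < F (dist x x) := hpos _ dist_nonneg
    nlinarith
  have hnF : 0 ≤ normF := le_trans (tsum_nonneg fun y => hF0 x y) (hnorm x).2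
  have key : ∀ z y' : Γ,
      (∑ Z ∈ Λ.powerset.filter (fun Z => z ∈ Z ∧ y' ∈ Z), L Z) ≤ MF * F (dist z y') := by
    intro z y'
    obtain ⟨hs, hb⟩ := hLF z y'
    have hEq : (∑ Z ∈ Λ.powerset.filter (fun Z => z ∈ Z ∧ y' ∈ Z), L Z)
        = ∑ W ∈ Λ.powerset.subtype (fun Z => z ∈ Z ∧ y' ∈ Z), L W.1 :=
      (Finset.sum_subtype_eq_sum_filter L).symm
    rw [hEq]
    exact le_trans (Summable.sum_le_tsum _ (fun i _ => hL0 _) hs) hb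
  set S := Λ.powerset.filter
      (fun Z => (Z ∩ Xr).Nonempty ∧ (Z ∩ (Λ \ Xr)).Nonempty ∧ Z ∩ X = ∅) with hS
  have step1 : (∑ Z ∈ S, L Z * ∑ z ∈ Z, F (dist x z))
      ≤ ∑ Z ∈ S, ∑ y' ∈ Λ \ Xr, (if y' ∈ Z then L Z * ∑ z ∈ Z, F (dist x z) else 0) := by
    apply Finset.sum_le_sum
    intro Z hZ
    obtain ⟨hpow, hP⟩ := Finset.mem_filter.mp hZ
    obtain ⟨y0, hy0⟩ := hP.2.1
    have hy0Z : y0 ∈ Z := (Finset.mem_inter.mp hy0).1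
    have hy0c : y0 ∈ Λ \ Xr := (Finset.mem_inter.mp hy0).2
    have hterm : ∀ y' ∈ Λ \ Xr,
        0 ≤ (if y' ∈ Z then L Z * ∑ z ∈ Z, F (dist x z) else 0) := by
      intro y' _
      split
      · exact mul_nonneg (hL0 Z) (Finset.sum_nonneg fun z _ => hF0 x z)
      · exact le_rfl
    calc L Z * ∑ z ∈ Z, F (dist x z)
        = (if y0 ∈ Z then L Z * ∑ z ∈ Z, F (dist x z) else 0) := by simp [hy0Z]
      _ ≤ _ := Finset.single_le_sum hterm hy0c
  have step3 : ∀ y' ∈ Λ \ Xr,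
      (∑ Z ∈ S, if y' ∈ Z then L Z * ∑ z ∈ Z, F (dist x z) else 0)
        ≤ MF * (CF * F (dist x y')) := by
    intro y' hy'
    have h1 : (∑ Z ∈ S, if y' ∈ Z then L Z * ∑ z ∈ Z, F (dist x z) else 0)
        = ∑ Z ∈ S, ∑ z ∈ Λ, (if y' ∈ Z ∧ z ∈ Z then L Z * F (dist x z) else 0) := by
      apply Finset.sum_congr rfl
      intro Z hZ
      have hZΛ : Z ⊆ Λ := Finset.mem_powerset.mp (Finset.mem_filter.mp hZ).1
      by_cases hy : y' ∈ Z
      · simp only [hy, if_true, true_and]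
        rw [Finset.sum_ite_mem, Finset.inter_eq_right.mpr hZΛ, Finset.mul_sum]
      · simp [hy]
    rw [h1, Finset.sum_comm]
    have h2 : ∀ z ∈ Λ,
        (∑ Z ∈ S, if y' ∈ Z ∧ z ∈ Z then L Z * F (dist x z) else 0)
          ≤ F (dist x z) * (MF * F (dist z y')) := by
      intro z hz
      have e1 : (∑ Z ∈ S, if y' ∈ Z ∧ z ∈ Z then L Z * F (dist x z) else 0)
          = F (dist x z) * ∑ Z ∈ S.filter (fun Z => y' ∈ Z ∧ z ∈ Z), L Z := by
        rw [Finset.mul_sum, ← Finset.sum_filter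
          (fun Z => y' ∈ Z ∧ z ∈ Z) (fun Z => L Z * F (dist x z))]
        apply Finset.sum_congr rfl
        intro Z _
        ring
      rw [e1]
      apply mul_le_mul_of_nonneg_left _ (hF0 x z)
      calc (∑ Z ∈ S.filter (fun Z => y' ∈ Z ∧ z ∈ Z), L Z)
          ≤ ∑ Z ∈ Λ.powerset.filter (fun Z => z ∈ Z ∧ y' ∈ Z), L Z := by
            apply Finset.sum_le_sum_of_subset_of_nonneg
            · intro Z hZ
              obtain ⟨hZS, hyz⟩ := Finset.mem_filter.mp hZ
              exact Finset.mem_filter.mpr ⟨(Finset.mem_filter.mp hZS).1, hyz.2, hyz.1⟩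
            · intro Z _ _; exact hL0 Z
        _ ≤ MF * F (dist z y') := key z y'
    calc (∑ z ∈ Λ, ∑ Z ∈ S, if y' ∈ Z ∧ z ∈ Z then L Z * F (dist x z) else 0)
        ≤ ∑ z ∈ Λ, F (dist x z) * (MF * F (dist z y')) := Finset.sum_le_sum h2
      _ = MF * ∑ z ∈ Λ, F (dist x z) * F (dist z y') := by
          rw [Finset.mul_sum]; apply Finset.sum_congr rfl; intro z _; ring
      _ ≤ MF * (CF * F (dist x y')) := by
          apply mul_le_mul_of_nonneg_left _ hMF
          exact le_trans (Summable.sum_le_tsum Λ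
            (fun z _ => mul_nonneg (hF0 x z) (hF0 z y')) (hconv x y').1) (hconv x y').2
  have hSig : 0 ≤ ∑ y ∈ Λ \ Xr, F (dist x y) := Finset.sum_nonneg fun y _ => hF0 x y
  calc (∑ Z ∈ S, L Z * ∑ z ∈ Z, F (dist x z))
      ≤ ∑ Z ∈ S, ∑ y' ∈ Λ \ Xr, (if y' ∈ Z then L Z * ∑ z ∈ Z, F (dist x z) else 0) :=
        step1
    _ = ∑ y' ∈ Λ \ Xr, ∑ Z ∈ S, (if y' ∈ Z then L Z * ∑ z ∈ Z, F (dist x z) else 0) :=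
        Finset.sum_comm
    _ ≤ ∑ y' ∈ Λ \ Xr, MF * (CF * F (dist x y')) := Finset.sum_le_sum step3
    _ = MF * CF * ∑ y ∈ Λ \ Xr, F (dist x y) := by
        rw [Finset.mul_sum]; apply Finset.sum_congr rfl; intro y _; ring
    _ ≤ MF * (CF + normF) * ∑ y ∈ Λ \ Xr, F (dist x y) := by
        nlinarith [mul_nonneg (mul_nonneg hMF hnF) hSig]
end

section
/- Let H be a finite-dimensional Hilbert space and (T_t)_{t≥0} a norm-continuous quantum dynamical semigroup on B(H) (unital, completely positive). Suppose there exists a state π on B(H) with π∘T_t = π for all t ≥ 0, and a function g : [0,∞) → [0,∞) with g(t) → 0 such that |(ψ − π)(T_t(A))| ≤ ‖A‖ g(t) for all states ψ, all A ∈ B(H), and all t ≥ 0. Then there exist constants c > 0, γ > 0 and a rank-one projection P on B(H)* with P(ξ) = ξ(1)·π such that the precomposition semigroup T_t' : ξ ↦ ξ∘T_t satisfies ‖T_t' − P‖ ≤ c e^{−γt} for all t ≥ 0. Conversely, if such P, c, γ exist with P rank one, then T_t' admits a state π with these properties and one may take g(t) = c e^{−γt}. -/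
/-!
Put `P A = π(A) • 1`. Unitality of `T_t`, invariance of `π` and `π 1 = 1` make `D_t = T_t - P`
multiplicative, `D_{s+t} = D_s D_t`, and `ξ ∘ T_t - ξ(1) π = ξ ∘ D_t`. Evaluating the state
estimate at vector states bounds the numerical range of `D_t A` by `‖A‖ g(t)`, and splitting into
real and imaginary parts gives `‖D_t‖ ≤ 2 g(t)`, so `‖D_{t₀}‖ ≤ 1/2` for some `t₀`. Positivity
gives `‖T_t‖ ≤ 2` by the same argument, so `D` is bounded and submultiplicativity turns the
halving at `t₀` into exponential decay. Conversely, a state has norm `1` (Cauchy–Schwarz for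
`(a, b) ↦ ψ (a⋆ b)`), so the exponential bound at `ξ = ψ` is the state estimate.
-/

open scoped ComplexOrder

def IsQState {H : Type*} [NormedAddCommGroup H] [InnerProductSpace ℂ H]
    [FiniteDimensional ℂ H] (φ : (H →L[ℂ] H) →L[ℂ] ℂ) : Prop :=
  φ 1 = 1 ∧ ∀ a : H →L[ℂ] H, 0 ≤ φ (star a * a)

open scoped InnerProductSpace ComplexStarModule

theorem IsIdempotentElem.sub_mul_sub {R : Type*} [Ring R] {a b p : R} (hp : IsIdempotentElem p)
    (ha : a * p = p) (hb : p * b = p) : (a - p) * (b - p) = a * b - p := by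
  rw [sub_mul, mul_sub, mul_sub, ha, hb, hp.eq]
  abel

theorem map_add_sub_smulRight_eq_mul {𝕜 E : Type*} [NormedField 𝕜]
    [NormedAddCommGroup E] [NormedSpace 𝕜 E] {T : ℝ → E →L[𝕜] E}
    (hsemi : ∀ s t, 0 ≤ s → 0 ≤ t → T (s + t) = T s ∘L T t) {π : E →L[𝕜] 𝕜} {u : E}
    (hu : π u = 1) (hTu : ∀ t, 0 ≤ t → T t u = u) (hπT : ∀ t, 0 ≤ t → ∀ x, π (T t x) = π x)
    {s t : ℝ} (hs : 0 ≤ s) (ht : 0 ≤ t) :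
    T (s + t) - π.smulRight u = (T s - π.smulRight u) * (T t - π.smulRight u) := by
  rw [IsIdempotentElem.sub_mul_sub, hsemi s t hs ht]
  · rfl
  all_goals ext x; simp [hu, hTu s hs, hπT t ht]

theorem ContinuousLinearMap.comp_sub_smulRight {𝕜 E : Type*} [NormedField 𝕜]
    [NormedAddCommGroup E] [NormedSpace 𝕜 E] (ξ π : E →L[𝕜] 𝕜) (Φ : E →L[𝕜] E) (u : E) :
    ξ.comp (Φ - π.smulRight u) = ξ.comp Φ - ξ u • π := by
  ext x; simp [mul_comm]

section Semigroup

variable {R : Type*} [SeminormedRing R]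

theorem norm_nat_mul_add_le_of_map_add_eq_mul {D : ℝ → R}
    (hmul : ∀ s t, 0 ≤ s → 0 ≤ t → D (s + t) = D s * D t)
    {t₀ M : ℝ} (ht₀ : 0 < t₀) (hhalf : ‖D t₀‖ ≤ 1 / 2)
    (hM : ∀ r, 0 ≤ r → r ≤ t₀ → ‖D r‖ ≤ M) (n : ℕ) {r : ℝ} (hr₀ : 0 ≤ r) (hr : r ≤ t₀) :
    ‖D (n * t₀ + r)‖ ≤ (1 / 2) ^ n * M := by
  induction n with
  | zero => simpa using hM r hr₀ hr
  | succ n ih =>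
    calc ‖D ((n + 1 : ℕ) * t₀ + r)‖ = ‖D t₀ * D (n * t₀ + r)‖ := by
          rw [← hmul _ _ ht₀.le (by positivity)]; push_cast; ring_nf
      _ ≤ ‖D t₀‖ * ‖D (n * t₀ + r)‖ := norm_mul_le _ _
      _ ≤ 1 / 2 * ((1 / 2) ^ n * M) := by gcongr
      _ = (1 / 2) ^ (n + 1) * M := by ring

theorem norm_le_exp_of_map_add_eq_mul {D : ℝ → R}
    (hmul : ∀ s t, 0 ≤ s → 0 ≤ t → D (s + t) = D s * D t)
    {t₀ M : ℝ} (ht₀ : 0 < t₀) (hhalf : ‖D t₀‖ ≤ 1 / 2)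
    (hM : ∀ r, 0 ≤ r → r ≤ t₀ → ‖D r‖ ≤ M) {t : ℝ} (ht : 0 ≤ t) :
    ‖D t‖ ≤ 2 * M * Real.exp (-(Real.log 2 / t₀) * t) := by
  have hM₀ : 0 ≤ M := (norm_nonneg _).trans (hM 0 le_rfl ht₀.le)
  set n := ⌊t / t₀⌋₊
  have hn : n * t₀ ≤ t := (le_div_iff₀ ht₀).mp (Nat.floor_le (by positivity))
  have hn' : t < (n + 1) * t₀ := (div_lt_iff₀ ht₀).mp (Nat.lt_floor_add_one _)
  have hpow : ((1 : ℝ) / 2) ^ n ≤ 2 * Real.exp (-(Real.log 2 / t₀) * t) := by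
    have hexp : Real.exp (-(Real.log 2 / t₀) * t) = (1 / 2) ^ (t / t₀) := by
      rw [Real.rpow_def_of_pos (by norm_num), one_div, Real.log_inv]; ring_nf
    have hle : t / t₀ ≤ n + 1 := (div_le_iff₀ ht₀).mpr hn'.le
    calc ((1 : ℝ) / 2) ^ n = 2 * (1 / 2) ^ ((n : ℝ) + 1) := by
          rw [Real.rpow_add_one (by norm_num), Real.rpow_natCast]; ring
      _ ≤ 2 * (1 / 2) ^ (t / t₀) := by
          gcongr 2 * ?_; exact Real.rpow_le_rpow_of_exponent_ge (by norm_num) (by norm_num) hle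
      _ = _ := by rw [hexp]
  calc ‖D t‖ = ‖D (n * t₀ + (t - n * t₀))‖ := by ring_nf
    _ ≤ (1 / 2) ^ n * M :=
      norm_nat_mul_add_le_of_map_add_eq_mul hmul ht₀ hhalf hM n (by linarith) (by linarith)
    _ ≤ 2 * Real.exp (-(Real.log 2 / t₀) * t) * M := by gcongr
    _ = 2 * M * Real.exp (-(Real.log 2 / t₀) * t) := by ring

end Semigroup

theorem norm_apply_le_of_map_one_of_nonneg {A : Type*} [CStarAlgebra A] [PartialOrder A]
    [StarOrderedRing A] (ψ : A →ₗ[ℂ] ℂ) (h1 : ψ 1 = 1) (hpos : ∀ a : A, 0 ≤ ψ (star a * a))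
    (a : A) : ‖ψ a‖ ≤ ‖a‖ := by
  let f : A →ₚ[ℂ] ℂ := PositiveLinearMap.mk₀ ψ fun x hx => by
    obtain ⟨b, rfl⟩ := CStarAlgebra.nonneg_iff_eq_star_mul_self.mp hx
    exact hpos b
  have hf (x : A) : f x = ψ x := rfl
  have norm_sq (b : A) : ‖f.toPreGNS b‖ ^ 2 = ‖ψ (star b * b)‖ := by
    simpa [← hf] using congrArg norm (f.preGNS_norm_sq (f.toPreGNS b))
  have hone : ‖f.toPreGNS 1‖ = 1 := by
    have := norm_sq 1
    rwa [star_one, one_mul, h1, norm_one, pow_eq_one_iff_of_nonneg (norm_nonneg _) two_ne_zero]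
      at this
  have ha : ‖f.toPreGNS a‖ ≤ ‖a‖ := by
    refine pow_le_pow_iff_left₀ (norm_nonneg _) (norm_nonneg _) two_ne_zero |>.mp ?_
    calc ‖f.toPreGNS a‖ ^ 2 = ‖f (star a * a)‖ := norm_sq a
      _ ≤ ‖f 1‖ * ‖star a * a‖ := f.norm_apply_le_of_nonneg _ (star_mul_self_nonneg a)
      _ = ‖a‖ ^ 2 := by rw [hf, h1, CStarRing.norm_star_mul_self, norm_one, one_mul, sq]
  -- Cauchy–Schwarz for the GNS inner product `⟪x, y⟫ = ψ (star x * y)`, applied to `1` and `a`.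
  have hcs := norm_inner_le_norm (𝕜 := ℂ) (f.toPreGNS 1) (f.toPreGNS a)
  rw [f.preGNS_inner_def, hone, one_mul] at hcs
  simpa [hf] using hcs.trans ha

section VectorState

variable {H : Type*} [NormedAddCommGroup H] [InnerProductSpace ℂ H]

noncomputable def vectorState (v : H) : (H →L[ℂ] H) →L[ℂ] ℂ :=
  innerSL ℂ v ∘L ContinuousLinearMap.apply ℂ H v

theorem vectorState_apply (v : H) (a : H →L[ℂ] H) : vectorState v a = ⟪v, a v⟫_ℂ := rfl

variable [CompleteSpace H]

theorem vectorState_star (v : H) (B : H →L[ℂ] H) :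
    vectorState v (star B) = starRingEnd ℂ (vectorState v B) := by
  rw [vectorState_apply, vectorState_apply, ContinuousLinearMap.star_eq_adjoint,
    ContinuousLinearMap.adjoint_inner_right, inner_conj_symm]

theorem re_vectorState_realPart (v : H) (B : H →L[ℂ] H) :
    (vectorState v (ℜ B)).re = (vectorState v B).re := by
  rw [realPart_apply_coe, ContinuousLinearMap.map_smul_of_tower, map_add, vectorState_star,
    Complex.smul_re, Complex.add_re, Complex.conj_re]
  ring

theorem norm_realPart_le_of_norm_vectorState_le {B : H →L[ℂ] H} {D : ℝ} (hD : 0 ≤ D)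
    (h : ∀ v : H, ‖v‖ = 1 → ‖vectorState v B‖ ≤ D) : ‖(ℜ B : H →L[ℂ] H)‖ ≤ D := by
  rw [ContinuousLinearMap.norm_eq_iSup_rayleighQuotient _
    (ContinuousLinearMap.isSelfAdjoint_iff_isSymmetric.mp (ℜ B).2)]
  refine ciSup_le fun x => ?_
  rcases eq_or_ne x 0 with rfl | hx
  · simpa using hD
  have hx' : (‖x‖⁻¹ : ℂ) ≠ 0 := by simpa using hx
  rw [← ContinuousLinearMap.rayleigh_smul _ x hx']
  set v := (‖x‖⁻¹ : ℂ) • x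
  have hv : ‖v‖ = 1 := by simp [v, norm_smul, hx]
  rw [ContinuousLinearMap.rayleighQuotient, ContinuousLinearMap.reApplyInnerSelf_apply, hv,
    one_pow, div_one, ← inner_conj_symm, RCLike.conj_re, RCLike.re_to_complex,
    ← vectorState_apply, re_vectorState_realPart]
  exact (Complex.abs_re_le_norm _).trans (h v hv)

theorem norm_le_two_mul_of_norm_vectorState_le {B : H →L[ℂ] H} {D : ℝ} (hD : 0 ≤ D)
    (h : ∀ v : H, ‖v‖ = 1 → ‖vectorState v B‖ ≤ D) : ‖B‖ ≤ 2 * D := by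
  have hI : ∀ v : H, ‖v‖ = 1 → ‖vectorState v (Complex.I • B)‖ ≤ D := fun v hv => by
    simpa using h v hv
  calc ‖B‖ = ‖(ℜ B : H →L[ℂ] H) + Complex.I • (ℑ B : H →L[ℂ] H)‖ := by
        rw [realPart_add_I_smul_imaginaryPart]
    _ ≤ ‖(ℜ B : H →L[ℂ] H)‖ + ‖(ℜ (Complex.I • B) : H →L[ℂ] H)‖ := by
        grw [norm_add_le, norm_smul, realPart_I_smul]; simp
    _ ≤ 2 * D := by
        linarith [norm_realPart_le_of_norm_vectorState_le hD h,
          norm_realPart_le_of_norm_vectorState_le hD hI]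

end VectorState

section QState

variable {H : Type*} [NormedAddCommGroup H] [InnerProductSpace ℂ H] [FiniteDimensional ℂ H]

theorem IsQState.norm_le_one {ψ : (H →L[ℂ] H) →L[ℂ] ℂ} (hψ : IsQState ψ) : ‖ψ‖ ≤ 1 :=
  ψ.opNorm_le_bound zero_le_one fun a => by
    simpa using norm_apply_le_of_map_one_of_nonneg ψ.toLinearMap hψ.1 hψ.2 a

theorem isQState_vectorState {v : H} (hv : ‖v‖ = 1) : IsQState (vectorState v) :=
  ⟨by simp [vectorState_apply, hv],
    fun a => ((ContinuousLinearMap.nonneg_iff_isPositive _).mp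
      (star_mul_self_nonneg a)).inner_nonneg_right v⟩

theorem IsQState.comp {ψ : (H →L[ℂ] H) →L[ℂ] ℂ} (hψ : IsQState ψ)
    {Φ : (H →L[ℂ] H) →L[ℂ] (H →L[ℂ] H)} (h1 : Φ 1 = 1)
    (hΦ : ∀ a : H →L[ℂ] H, a.IsPositive → (Φ a).IsPositive) : IsQState (ψ.comp Φ) := by
  refine ⟨by simp [h1, hψ.1], fun a => ?_⟩
  have := (ContinuousLinearMap.nonneg_iff_isPositive _).mpr
    (hΦ _ ((ContinuousLinearMap.nonneg_iff_isPositive _).mp (star_mul_self_nonneg a)))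
  obtain ⟨b, hb⟩ := CStarAlgebra.nonneg_iff_eq_star_mul_self.mp this
  simpa [hb] using hψ.2 b

theorem norm_le_two_of_map_one_of_isPositive {Φ : (H →L[ℂ] H) →L[ℂ] (H →L[ℂ] H)}
    (h1 : Φ 1 = 1) (hΦ : ∀ a : H →L[ℂ] H, a.IsPositive → (Φ a).IsPositive) : ‖Φ‖ ≤ 2 :=
  Φ.opNorm_le_bound zero_le_two fun a =>
    norm_le_two_mul_of_norm_vectorState_le (norm_nonneg a) fun _ hv =>
      norm_apply_le_of_map_one_of_nonneg _ ((isQState_vectorState hv).comp h1 hΦ).1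
        ((isQState_vectorState hv).comp h1 hΦ).2 a

theorem norm_sub_smulRight_le_of_forall_isQState {π : (H →L[ℂ] H) →L[ℂ] ℂ} (hπ : IsQState π)
    {Φ : (H →L[ℂ] H) →L[ℂ] (H →L[ℂ] H)} {ε : ℝ}
    (h : ∀ ψ, IsQState ψ → ∀ A, ‖ψ (Φ A) - π A‖ ≤ ‖A‖ * ε) :
    ‖Φ - π.smulRight 1‖ ≤ 2 * ε := by
  have hε : 0 ≤ ε := by
    have hone : (1 : H →L[ℂ] H) ≠ 0 := fun h => by simpa [h] using hπ.1
    exact nonneg_of_mul_nonneg_right ((norm_nonneg _).trans (h π hπ 1)) (norm_pos_iff.mpr hone)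
  refine ContinuousLinearMap.opNorm_le_bound _ (by positivity) fun A => ?_
  refine (norm_le_two_mul_of_norm_vectorState_le (D := ‖A‖ * ε) (by positivity)
    fun v hv => ?_).trans_eq (by ring)
  simpa [(isQState_vectorState hv).1] using h _ (isQState_vectorState hv) A

theorem IsQState.norm_apply_sub_le {ψ π : (H →L[ℂ] H) →L[ℂ] ℂ} (hψ : IsQState ψ)
    {Φ : (H →L[ℂ] H) →L[ℂ] (H →L[ℂ] H)} {ε : ℝ} (hε : 0 ≤ ε)
    (h : ‖ψ.comp Φ - ψ 1 • π‖ ≤ ε * ‖ψ‖) (A : H →L[ℂ] H) : ‖ψ (Φ A) - π A‖ ≤ ‖A‖ * ε :=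
  calc ‖ψ (Φ A) - π A‖ = ‖(ψ.comp Φ - ψ 1 • π) A‖ := by simp [hψ.1]
    _ ≤ ε * ‖ψ‖ * ‖A‖ := (ContinuousLinearMap.le_opNorm _ _).trans (by grw [h])
    _ ≤ ε * 1 * ‖A‖ := by grw [hψ.norm_le_one]
    _ = ‖A‖ * ε := by ring

end QState

theorem dynamical_fixed_point_iff_exponential_convergence_general
    {H : Type*} [NormedAddCommGroup H] [InnerProductSpace ℂ H] [FiniteDimensional ℂ H]
    (T : ℝ → ((H →L[ℂ] H) →L[ℂ] (H →L[ℂ] H)))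
    (hsemi : ∀ s t : ℝ, 0 ≤ s → 0 ≤ t → T (s + t) = T s ∘L T t)
    (hunital : ∀ t : ℝ, 0 ≤ t → T t 1 = 1)
    (hpos : ∀ t : ℝ, 0 ≤ t → ∀ a : H →L[ℂ] H, a.IsPositive → (T t a).IsPositive) :
    (∃ π : (H →L[ℂ] H) →L[ℂ] ℂ, IsQState π ∧
      (∀ t : ℝ, 0 ≤ t → ∀ A : H →L[ℂ] H, π (T t A) = π A) ∧
      ∃ g : ℝ → ℝ, Filter.Tendsto g Filter.atTop (nhds 0) ∧
        ∀ ψ : (H →L[ℂ] H) →L[ℂ] ℂ, IsQState ψ →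
          ∀ A : H →L[ℂ] H, ∀ t : ℝ, 0 ≤ t →
            ‖ψ (T t A) - π (T t A)‖ ≤ ‖A‖ * g t) ↔
    (∃ π : (H →L[ℂ] H) →L[ℂ] ℂ, IsQState π ∧
      (∀ t : ℝ, 0 ≤ t → ∀ A : H →L[ℂ] H, π (T t A) = π A) ∧
      ∃ c : ℝ, 0 < c ∧ ∃ γ : ℝ, 0 < γ ∧
        ∀ t : ℝ, 0 ≤ t → ∀ ξ : (H →L[ℂ] H) →L[ℂ] ℂ,
          ‖ξ.comp (T t) - ξ 1 • π‖ ≤ c * Real.exp (-γ * t) * ‖ξ‖) := by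
  constructor
  · rintro ⟨π, hπ, hinv, g, hg, hest⟩
    set P := π.smulRight (1 : H →L[ℂ] H)
    have hbdd (t : ℝ) (ht : 0 ≤ t) : ‖T t - P‖ ≤ 2 + ‖P‖ :=
      (norm_sub_le (T t) P).trans <| by
        grw [norm_le_two_of_map_one_of_isPositive (hunital t ht) (hpos t ht)]
    obtain ⟨t₀, hgt₀, ht₀⟩ :=
      ((hg.eventually (gt_mem_nhds (by norm_num : (0 : ℝ) < 1 / 4))).and
        (Filter.eventually_gt_atTop 0)).exists
    have hhalf : ‖T t₀ - P‖ ≤ 1 / 2 := by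
      grw [norm_sub_smulRight_le_of_forall_isQState hπ fun ψ hψ A => by
        simpa only [hinv t₀ ht₀.le] using hest ψ hψ A t₀ ht₀.le]
      linarith
    refine ⟨π, hπ, hinv, 2 * (2 + ‖P‖), by positivity, Real.log 2 / t₀, by positivity,
      fun t ht ξ => ?_⟩
    calc ‖ξ.comp (T t) - ξ 1 • π‖ = ‖ξ.comp (T t - P)‖ := by rw [ξ.comp_sub_smulRight]
      _ ≤ ‖ξ‖ * ‖T t - P‖ := ξ.opNorm_comp_le _
      _ ≤ ‖ξ‖ * (2 * (2 + ‖P‖) * Real.exp (-(Real.log 2 / t₀) * t)) := by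
        grw [norm_le_exp_of_map_add_eq_mul (D := fun t => T t - P)
          (fun s t hs ht => map_add_sub_smulRight_eq_mul hsemi hπ.1 hunital hinv hs ht) ht₀ hhalf
          (fun r hr _ => hbdd r hr) ht]
      _ = _ := by ring
  · rintro ⟨π, hπ, hinv, c, hc, γ, hγ, hbound⟩
    refine ⟨π, hπ, hinv, fun t => c * Real.exp (-γ * t), ?_, fun ψ hψ A t ht => ?_⟩
    · simpa using (Real.tendsto_exp_atBot.comp
        (Filter.tendsto_id.const_mul_atTop_of_neg (neg_lt_zero.mpr hγ))).const_mul c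
    rw [hinv t ht]
    exact hψ.norm_apply_sub_le (by positivity) (hbound t ht ψ) A

/-- Let `H` be a finite-dimensional Hilbert space and `(T_t)_{t≥0}` a
norm-continuous quantum dynamical semigroup on `B(H)` (unital, positive). There exists an
invariant state `π` together with a function `g → 0` such that
`|(ψ − π)(T_t A)| ≤ ‖A‖ g t` for all states `ψ`, operators `A` and `t ≥ 0`, if and only if
there exist a state `π`, invariant under the dynamics, and constants `c > 0`, `γ > 0` such
that the precomposition semigroup `T_t' : ξ ↦ ξ ∘ T_t` satisfies `‖T_t' − P‖ ≤ c e^{-γt}`,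
where `P` is the rank-one projection `P ξ = ξ(1) π` on `B(H)*` (the operator-norm bound is
expressed as `‖ξ ∘ T_t − ξ(1) π‖ ≤ c e^{-γt} ‖ξ‖` for all `ξ ∈ B(H)*`); in that case one
may take `g t = c e^{-γt}`. -/
theorem dynamical_fixed_point_iff_exponential_convergence
    {H : Type*} [NormedAddCommGroup H] [InnerProductSpace ℂ H] [FiniteDimensional ℂ H]
    (T : ℝ → ((H →L[ℂ] H) →L[ℂ] (H →L[ℂ] H)))
    (hT0 : T 0 = 1)
    (hsemi : ∀ s t : ℝ, 0 ≤ s → 0 ≤ t → T (s + t) = T s ∘L T t)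
    (hcont : Filter.Tendsto T (nhdsWithin 0 (Set.Ioi 0)) (nhds 1))
    (hunital : ∀ t : ℝ, 0 ≤ t → T t 1 = 1)
    (hpos : ∀ t : ℝ, 0 ≤ t → ∀ a : H →L[ℂ] H, a.IsPositive → (T t a).IsPositive) :
    (∃ π : (H →L[ℂ] H) →L[ℂ] ℂ, IsQState π ∧
      (∀ t : ℝ, 0 ≤ t → ∀ A : H →L[ℂ] H, π (T t A) = π A) ∧
      ∃ g : ℝ → ℝ, Filter.Tendsto g Filter.atTop (nhds 0) ∧
        ∀ ψ : (H →L[ℂ] H) →L[ℂ] ℂ, IsQState ψ →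
          ∀ A : H →L[ℂ] H, ∀ t : ℝ, 0 ≤ t →
            ‖ψ (T t A) - π (T t A)‖ ≤ ‖A‖ * g t) ↔
    (∃ π : (H →L[ℂ] H) →L[ℂ] ℂ, IsQState π ∧
      (∀ t : ℝ, 0 ≤ t → ∀ A : H →L[ℂ] H, π (T t A) = π A) ∧
      ∃ c : ℝ, 0 < c ∧ ∃ γ : ℝ, 0 < γ ∧
        ∀ t : ℝ, 0 ≤ t → ∀ ξ : (H →L[ℂ] H) →L[ℂ] ℂ,
          ‖ξ.comp (T t) - ξ 1 • π‖ ≤ c * Real.exp (-γ * t) * ‖ξ‖) :=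
  dynamical_fixed_point_iff_exponential_convergence_general T hsemi hunital hpos
end
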